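/- A two-dimensional affine quadric with a rational point contains a rational line if and only if the relevant discriminant is a square: assume the equation q(x) = m has a solution x ∈ ℚ³. Then −m·det(q) is a square in ℚ if and only if there exist a, b ∈ ℚ³ with b ≠ 0 such that q(a + t·b) = m for every t ∈ ℚ. -/

import Mathlib

open MvPolynomial

/-- The Gram matrix (over `ℚ`) of a quadratic form given as an integral
multivariate polynomial. -/
noncomputable def quadGram {n : ℕ} (q : MvPolynomial (Fin n) ℤ) :
    Matrix (Fin n) (Fin n) ℚ := fun i j =>
  if i = j then ((q.coeff (Finsupp.single i 2) : ℤ) : ℚ)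
  else ((q.coeff (Finsupp.single i 1 + Finsupp.single j 1) : ℤ) : ℚ) / 2

open Matrix

/-!
Write the form as `Q x = x ⬝ᵥ G *ᵥ x` with `G = quadGram q`. The line `a + t • b` lies on
`Q = m` exactly when `Q a = m`, `a ⬝ᵥ G *ᵥ b = 0` and `Q b = 0`.

Given such a line, choose `c` with `b ⬝ᵥ G *ᵥ c ≠ 0` (`G` is nondegenerate); the Gram determinant
of `a, b, c` is `det[a; b; c] ^ 2 * det G = -m * (b ⬝ᵥ G *ᵥ c) ^ 2`, so `-m * det G` is a square.
Conversely, if `Q x = m`, the Gram determinant of `x` and a basis `u, v` of the plane orthogonal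
to `x` shows that the binary form `Q` restricted to that plane has discriminant `-det G / m` up to
a square. When `-m * det G` is a square, that binary form therefore has an isotropic vector `b`,
and `x + t • b` is the line.
-/

theorem Finsupp.exists_eq_single_add_single_of_degree_eq_two {σ : Type*} {d : σ →₀ ℕ}
    (hd : d.degree = 2) : ∃ i j, d = single i 1 + single j 1 := by
  classical
  have hcard : Multiset.card (toMultiset d) = 2 := by
    rw [card_toMultiset, ← hd]; rfl
  obtain ⟨i, j, hij⟩ := Multiset.card_eq_two.mp hcard
  refine ⟨i, j, ?_⟩
  rw [← Multiset.toFinsupp_eq_iff.mpr hij.symm, Multiset.insert_eq_cons, ← Multiset.singleton_add,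
    Multiset.toFinsupp_add, Multiset.toFinsupp_singleton, Multiset.toFinsupp_singleton]

section QuadGram

variable {n : ℕ}

theorem quadGram_isSymm (q : MvPolynomial (Fin n) ℤ) : (quadGram q).IsSymm := by
  ext i j
  simp only [transpose_apply, quadGram, eq_comm (a := j)]
  split_ifs with h
  · rw [h]
  · rw [add_comm]

theorem quadGram_add (p q : MvPolynomial (Fin n) ℤ) :
    quadGram (p + q) = quadGram p + quadGram q := by
  ext i j
  simp only [quadGram, coeff_add, Int.cast_add, Matrix.add_apply]
  split_ifs <;> ring

theorem quadGram_zero : quadGram (0 : MvPolynomial (Fin n) ℤ) = 0 := by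
  ext i j
  simp [quadGram]

theorem quadGram_monomial_single_add_single (i j : Fin n) (c : ℤ) :
    quadGram (monomial (Finsupp.single i 1 + Finsupp.single j 1) c) =
      ((c : ℚ) / 2) • (Matrix.single i j 1 + Matrix.single j i 1) := by
  ext k l
  have h2 : Finsupp.single k 2 = Finsupp.single k 1 + Finsupp.single k 1 := by
    rw [← Finsupp.single_add]
  simp only [quadGram, coeff_monomial, h2,
    Finsupp.single_add_single_eq_single_add_single one_ne_zero one_ne_zero]
  simp only [Matrix.smul_apply, Matrix.add_apply, Matrix.single_apply, smul_eq_mul]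
  split_ifs <;> grind

theorem aeval_eq_dotProduct_mulVec_quadGram {q : MvPolynomial (Fin n) ℤ} (hq : q.IsHomogeneous 2)
    (x : Fin n → ℚ) : aeval x q = x ⬝ᵥ quadGram q *ᵥ x := by
  rw [q.as_sum]
  refine Finset.sum_induction _ (fun p => aeval x p = x ⬝ᵥ quadGram p *ᵥ x) ?_ ?_ ?_
  · intro p p' hp hp'
    rw [map_add, hp, hp', quadGram_add, add_mulVec, dotProduct_add]
  · simp [quadGram_zero]
  · intro d hd
    have hdeg : d.degree = 2 := by
      by_contra h
      exact MvPolynomial.mem_support_iff.mp hd (hq.coeff_eq_zero h)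
    obtain ⟨i, j, rfl⟩ := Finsupp.exists_eq_single_add_single_of_degree_eq_two hdeg
    rw [quadGram_monomial_single_add_single, monomial_add_single, ← C_mul_X_eq_monomial]
    simp only [eq_intCast, pow_one, map_mul, map_intCast, aeval_X, smul_add, smul_single,
      smul_eq_mul, mul_one, add_mulVec, single_mulVec_eq, dotProduct_add, dotProduct_smul,
      dotProduct_single]
    ring

end QuadGram

namespace Matrix

variable {K : Type*} [Field K] {ι : Type*} [Fintype ι]

theorem IsSymm.dotProduct_mulVec_comm {G : Matrix ι ι K} (hG : G.IsSymm) (x y : ι → K) :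
    x ⬝ᵥ G *ᵥ y = y ⬝ᵥ G *ᵥ x := by
  conv_lhs => rw [← hG.eq]
  rw [dotProduct_mulVec, vecMul_transpose, dotProduct_comm]

theorem IsSymm.det_of_sq_mul_det_fin_three {G : Matrix (Fin 3) (Fin 3) K} (hG : G.IsSymm)
    (x y z : Fin 3 → K) :
    (of ![x, y, z]).det ^ 2 * G.det =
      (x ⬝ᵥ G *ᵥ x) * (y ⬝ᵥ G *ᵥ y) * (z ⬝ᵥ G *ᵥ z)
        + 2 * (x ⬝ᵥ G *ᵥ y) * (x ⬝ᵥ G *ᵥ z) * (y ⬝ᵥ G *ᵥ z)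
        - (x ⬝ᵥ G *ᵥ x) * (y ⬝ᵥ G *ᵥ z) ^ 2 - (y ⬝ᵥ G *ᵥ y) * (x ⬝ᵥ G *ᵥ z) ^ 2
        - (z ⬝ᵥ G *ᵥ z) * (x ⬝ᵥ G *ᵥ y) ^ 2 := by
  set P : Matrix (Fin 3) (Fin 3) K := of ![x, y, z]
  have hdet : P.det ^ 2 * G.det = (P * G * Pᵀ).det := by
    rw [det_mul, det_mul, det_transpose]; ring
  have hrow : ∀ i, P i = ![x, y, z] i := fun _ => rfl
  rw [hdet, det_fin_three]
  simp only [mul_mul_apply, transpose_transpose, hrow, Matrix.cons_val_zero, Matrix.cons_val_one,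
    Matrix.cons_val_two, Matrix.head_cons, Matrix.tail_cons, hG.dotProduct_mulVec_comm y x,
    hG.dotProduct_mulVec_comm z x, hG.dotProduct_mulVec_comm z y]
  ring

theorem IsSymm.dotProduct_mulVec_smul_add_smul {G : Matrix ι ι K} (hG : G.IsSymm)
    (α β : K) (u v : ι → K) :
    (α • u + β • v) ⬝ᵥ G *ᵥ (α • u + β • v) =
      α ^ 2 * (u ⬝ᵥ G *ᵥ u) + 2 * α * β * (u ⬝ᵥ G *ᵥ v) + β ^ 2 * (v ⬝ᵥ G *ᵥ v) := by
  simp only [mulVec_add, mulVec_smul, dotProduct_add, add_dotProduct, dotProduct_smul,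
    smul_dotProduct, smul_eq_mul, hG.dotProduct_mulVec_comm v u]
  ring

theorem IsSymm.forall_dotProduct_mulVec_add_smul_eq_iff [NeZero (2 : K)] {G : Matrix ι ι K}
    (hG : G.IsSymm) {a b : ι → K} {m : K} :
    (∀ t : K, (a + t • b) ⬝ᵥ G *ᵥ (a + t • b) = m) ↔
      a ⬝ᵥ G *ᵥ a = m ∧ a ⬝ᵥ G *ᵥ b = 0 ∧ b ⬝ᵥ G *ᵥ b = 0 := by
  have expand (t : K) : (a + t • b) ⬝ᵥ G *ᵥ (a + t • b) =
      a ⬝ᵥ G *ᵥ a + 2 * t * (a ⬝ᵥ G *ᵥ b) + t ^ 2 * (b ⬝ᵥ G *ᵥ b) := by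
    simpa using hG.dotProduct_mulVec_smul_add_smul 1 t a b
  simp only [expand]
  constructor
  · intro h
    have ha : a ⬝ᵥ G *ᵥ a = m := by simpa using h 0
    have hb : b ⬝ᵥ G *ᵥ b = 0 := by
      have : 2 * (b ⬝ᵥ G *ᵥ b) = 0 := by linear_combination h 1 + h (-1) - 2 * ha
      exact (mul_eq_zero.mp this).resolve_left two_ne_zero
    have hab : a ⬝ᵥ G *ᵥ b = 0 := by
      have : 2 * (a ⬝ᵥ G *ᵥ b) = 0 := by linear_combination h 1 - ha - hb
      exact (mul_eq_zero.mp this).resolve_left two_ne_zero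
    exact ⟨ha, hab, hb⟩
  · rintro ⟨ha, hab, hb⟩ t
    rw [ha, hab, hb]
    ring

theorem IsSymm.exists_isotropic_of_linearIndependent {G : Matrix ι ι K} (hG : G.IsSymm)
    {u v : ι → K} (huv : LinearIndependent K ![u, v]) {r : K}
    (hr : r ^ 2 = (u ⬝ᵥ G *ᵥ v) ^ 2 - (u ⬝ᵥ G *ᵥ u) * (v ⬝ᵥ G *ᵥ v)) :
    ∃ α β : K, α • u + β • v ≠ 0 ∧ (α • u + β • v) ⬝ᵥ G *ᵥ (α • u + β • v) = 0 := by
  by_cases hu : u ⬝ᵥ G *ᵥ u = 0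
  · exact ⟨1, 0, by simpa using huv.ne_zero 0, by simpa using hu⟩
  · -- the quadratic formula for `α / β`, with denominators cleared
    refine ⟨r - u ⬝ᵥ G *ᵥ v, u ⬝ᵥ G *ᵥ u,
      fun h => hu (LinearIndependent.pair_iff.mp huv _ _ h).2, ?_⟩
    rw [hG.dotProduct_mulVec_smul_add_smul]
    linear_combination (u ⬝ᵥ G *ᵥ u) * hr

theorem exists_linearIndependent_pair_dotProduct_eq_zero {w : Fin 3 → K} (hw : w ≠ 0) :
    ∃ u v : Fin 3 → K, LinearIndependent K ![u, v] ∧ w ⬝ᵥ u = 0 ∧ w ⬝ᵥ v = 0 := by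
  obtain ⟨i, hi⟩ : ∃ i, w i ≠ 0 := Function.ne_iff.mp hw
  obtain ⟨j, k, hij, hik, hjk⟩ : ∃ j k : Fin 3, i ≠ j ∧ i ≠ k ∧ j ≠ k := by
    fin_cases i <;> decide
  refine ⟨w j • Pi.single i 1 - w i • Pi.single j 1, w k • Pi.single i 1 - w i • Pi.single k 1,
    LinearIndependent.pair_iff.mpr fun s t hst => ?_, ?_, ?_⟩
  · exact ⟨by simpa [hij.symm, hjk, hi] using congrFun hst j,
      by simpa [hik.symm, hjk.symm, hi] using congrFun hst k⟩
  all_goals simp only [dotProduct_sub, dotProduct_smul, dotProduct_single, smul_eq_mul]; ring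

theorem IsSymm.exists_isotropic_orthogonal_of_isSquare {G : Matrix (Fin 3) (Fin 3) K}
    (hG : G.IsSymm) {x : Fin 3 → K} (hx : x ⬝ᵥ G *ᵥ x ≠ 0)
    (hsq : IsSquare (-(x ⬝ᵥ G *ᵥ x) * G.det)) :
    ∃ b ≠ 0, x ⬝ᵥ G *ᵥ b = 0 ∧ b ⬝ᵥ G *ᵥ b = 0 := by
  have hw : x ᵥ* G ≠ 0 := fun h => hx (by rw [dotProduct_mulVec, h, zero_dotProduct])
  obtain ⟨u, v, huv, hu, hv⟩ := exists_linearIndependent_pair_dotProduct_eq_zero hw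
  rw [← dotProduct_mulVec] at hu hv
  obtain ⟨s, hs⟩ := hsq
  have hgram := hG.det_of_sq_mul_det_fin_three x u v
  rw [hu, hv] at hgram
  obtain ⟨α, β, hne, hiso⟩ := hG.exists_isotropic_of_linearIndependent huv
    (r := (of ![x, u, v]).det * s / (x ⬝ᵥ G *ᵥ x)) (by
      field_simp
      linear_combination (-(of ![x, u, v]).det ^ 2) * hs - (x ⬝ᵥ G *ᵥ x) * hgram)
  refine ⟨α • u + β • v, hne, ?_, hiso⟩
  simp only [mulVec_add, mulVec_smul, dotProduct_add, dotProduct_smul, hu, hv, smul_zero, add_zero]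

theorem IsSymm.isSquare_neg_mul_det_of_isotropic {G : Matrix (Fin 3) (Fin 3) K} (hG : G.IsSymm)
    (hdet : G.det ≠ 0) {a b : Fin 3 → K} (hb0 : b ≠ 0) (hab : a ⬝ᵥ G *ᵥ b = 0)
    (hb : b ⬝ᵥ G *ᵥ b = 0) : IsSquare (-(a ⬝ᵥ G *ᵥ a) * G.det) := by
  obtain ⟨c, hc⟩ := (nondegenerate_of_det_ne_zero hdet).exists_not_ortho_of_ne_zero hb0
  have hgram := hG.det_of_sq_mul_det_fin_three a b c
  rw [hab, hb] at hgram
  by_cases hd : (of ![a, b, c]).det = 0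
  · have ha : a ⬝ᵥ G *ᵥ a = 0 := by
      have : (a ⬝ᵥ G *ᵥ a) * (b ⬝ᵥ G *ᵥ c) ^ 2 = 0 := by
        rw [hd] at hgram
        linear_combination hgram
      simpa [hc] using this
    rw [ha, neg_zero, zero_mul]
    exact IsSquare.zero
  · refine ⟨(a ⬝ᵥ G *ᵥ a) * (b ⬝ᵥ G *ᵥ c) / (of ![a, b, c]).det, ?_⟩
    field_simp
    linear_combination (-(a ⬝ᵥ G *ᵥ a)) * hgram

end Matrix

/-- A two-dimensional affine quadric with a rational point contains a rational
line if and only if the relevant discriminant is a square. -/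
theorem ternary_quadric_contains_line_iff_square
    (q : MvPolynomial (Fin 3) ℤ) (hq : q.IsHomogeneous 2)
    (hnd : (quadGram q).det ≠ 0)
    (m : ℤ) (hm : m ≠ 0)
    (hrat : ∃ x : Fin 3 → ℚ, aeval x q = (m : ℚ)) :
    IsSquare (-(m : ℚ) * (quadGram q).det) ↔
      ∃ a b : Fin 3 → ℚ, b ≠ 0 ∧
        ∀ t : ℚ, aeval (fun i => a i + t * b i) q = (m : ℚ) := by
  have hG := quadGram_isSymm q
  simp only [aeval_eq_dotProduct_mulVec_quadGram hq] at hrat ⊢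
  constructor
  · intro hsq
    obtain ⟨x, hx⟩ := hrat
    rw [← hx] at hsq
    obtain ⟨b, hb0, hxb, hb⟩ :=
      hG.exists_isotropic_orthogonal_of_isSquare (hx ▸ Int.cast_ne_zero.mpr hm) hsq
    exact ⟨x, b, hb0, hG.forall_dotProduct_mulVec_add_smul_eq_iff.mpr ⟨hx, hxb, hb⟩⟩
  · rintro ⟨a, b, hb0, hline⟩
    obtain ⟨ha, hab, hb⟩ := hG.forall_dotProduct_mulVec_add_smul_eq_iff.mp hline
    rw [← ha]
    exact hG.isSquare_neg_mul_det_of_isotropic hnd hb0 hab hb
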